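/- arXiv:2012.15100 — 2 statements merged into one kernel-verified Lean document; each statement's English description precedes it below -/
import Mathlib

section
/- Let G be a graph and G = G1 ∪ G2 with G1 ∩ G2 = H a single vertex or a single edge (a cut vertex or cut edge configuration). If the vertex set of each Gi admits a partition into a set inducing a forest of maximum degree at most 3 and a set inducing a forest, and the partitions agree on V(H), and moreover in each Gi every neighbor of a degree-1-colored vertex of H outside H receives color 2, then G admits such a partition extending both. -/
/-- `A` induces a forest of maximum degree at most 3 in `G`. -/
def SimpleGraph.IsForest3On {V : Type*} (G : SimpleGraph V) (A : Set V) : Prop :=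
  (G.induce A).IsAcyclic ∧ ∀ v : A, ((G.induce A).neighborSet v).encard ≤ 3

/-!
Colour `G` by `c1` on `V(G1)` and by `c2` elsewhere. The pair `(V(G1), V(G2))` is a separation
of `G` whose separator `H` is a clique. A cycle of `G` that is not contained in one side
contains a vertex `z` outside `V(G1)`, say; following the cycle from `z` in both directions
until it first returns to `V(G1)` gives two distinct vertices `k₁, k₂` of `H`, and the arc
`k₁ … z … k₂` lies in `V(G2)`. Closing it with the edge `k₁k₂` produces a cycle inside `G2`.
So each colour class of the glued colouring is still a forest. Degrees only grow at vertices
of `H`, and by the neighbour condition a vertex of `H` of colour `0` has all its colour-`0`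
neighbours inside `H`, of which there are at most two.
-/

namespace SimpleGraph

variable {V : Type*} {G : SimpleGraph V}

theorem isAcyclic_induce_iff {s : Set V} :
    (G.induce s).IsAcyclic ↔ ∀ ⦃v : V⦄ (c : G.Walk v v), c.IsCycle → ¬∀ x ∈ c.support, x ∈ s := by
  refine ⟨fun hs v c hc hcs => hs (c.induce s hcs) ?_, fun hs v c hc => ?_⟩
  · exact .of_map (f := (Embedding.induce s).toHom) (by rwa [Walk.map_induce])
  · refine hs (c.map (Embedding.induce s).toHom)
      ((Walk.isCycle_map_iff_of_injective Subtype.val_injective).2 hc) fun x hx => ?_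
    obtain ⟨y, -, rfl⟩ := List.mem_map.1 (Walk.support_map _ _ ▸ hx)
    exact y.2

theorem encard_neighborSet_induce (A : Set V) (v : A) :
    ((G.induce A).neighborSet v).encard = (G.neighborSet v ∩ A).encard := by
  rw [neighborSet_induce, ← Set.preimage_inter_range, Subtype.range_coe]
  exact Set.encard_preimage_of_injective_subset_range Subtype.val_injective
    (by rw [Subtype.range_coe]; exact Set.inter_subset_right)

theorem isClique_and_encard_le_two {K : Set V}
    (hK : (∃ u, K = {u}) ∨ ∃ u v, G.Adj u v ∧ K = {u, v}) : G.IsClique K ∧ K.encard ≤ 2 := by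
  rcases hK with ⟨u, rfl⟩ | ⟨u, v, huv, rfl⟩
  · simp
  · exact ⟨isClique_pair.2 fun _ => huv, (Set.encard_insert_le _ _).trans (by norm_num)⟩

theorem Walk.exists_isCycle_of_adj {u v : V} (p : G.Walk u v) (huv : G.Adj u v)
    (hp : s(u, v) ∉ p.edges) : ∃ c : G.Walk v v, c.IsCycle ∧ c.support ⊆ p.support := by
  classical
  refine ⟨.cons huv.symm p.bypass, (cons_isCycle_iff _ _).2 ⟨p.bypass_isPath, fun he => ?_⟩,
    List.cons_subset.2 ⟨p.end_mem_support, p.support_bypass_subset_support⟩⟩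
  exact hp (p.edges_bypass_subset_edges (Sym2.eq_swap ▸ he))

theorem Walk.exists_isCycle_of_walks_to_adj {S : Set V} {z k₁ k₂ : V} (q₁ : G.Walk z k₁)
    (q₂ : G.Walk z k₂) (hadj : G.Adj k₁ k₂) (hk₁ : k₁ ∈ S) (hk₂ : k₂ ∈ S)
    (hq₁ : ∀ x ∈ q₁.support, x ∈ S → x = k₁) (hq₂ : ∀ x ∈ q₂.support, x ∈ S → x = k₂) :
    ∃ c : G.Walk k₂ k₂, c.IsCycle ∧ ∀ x ∈ c.support, x ∈ q₁.support ∨ x ∈ q₂.support := by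
  obtain ⟨c, hc, hsub⟩ := (q₁.reverse.append q₂).exists_isCycle_of_adj hadj <| by
    rw [edges_append, edges_reverse, List.mem_append, List.mem_reverse]
    rintro (he | he)
    · exact hadj.ne (hq₁ k₂ (q₁.snd_mem_support_of_mem_edges he) hk₂).symm
    · exact hadj.ne (hq₂ k₁ (q₂.fst_mem_support_of_mem_edges he) hk₁)
  exact ⟨c, hc, fun x hx => by simpa [mem_support_append_iff] using hsub hx⟩

structure IsSeparation (G : SimpleGraph V) (S T : Set V) : Prop where
  union_eq_univ : S ∪ T = Set.univ
  mem_or_mem_of_adj : ∀ ⦃x y : V⦄, G.Adj x y → x ∈ S ∧ y ∈ S ∨ x ∈ T ∧ y ∈ T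

theorem Subgraph.isSeparation_verts {G₁ G₂ : G.Subgraph} (h : G₁ ⊔ G₂ = ⊤) :
    G.IsSeparation G₁.verts G₂.verts where
  union_eq_univ := by rw [← Subgraph.verts_sup, h, Subgraph.verts_top]
  mem_or_mem_of_adj x y hxy := by
    rw [← Subgraph.top_adj, ← h, Subgraph.sup_adj] at hxy
    exact hxy.imp (fun h => ⟨h.fst_mem, h.snd_mem⟩) fun h => ⟨h.fst_mem, h.snd_mem⟩

namespace IsSeparation

variable {S T : Set V}

theorem symm (h : G.IsSeparation S T) : G.IsSeparation T S :=
  ⟨Set.union_comm S T ▸ h.union_eq_univ, fun _ _ hxy => (h.mem_or_mem_of_adj hxy).symm⟩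

theorem mem_or_mem (h : G.IsSeparation S T) (v : V) : v ∈ S ∨ v ∈ T :=
  (Set.ext_iff.1 h.union_eq_univ v).2 trivial

theorem neighborSet_subset (h : G.IsSeparation S T) {v : V} (hv : v ∉ T) :
    G.neighborSet v ⊆ S :=
  fun _ hu => ((h.mem_or_mem_of_adj hu).resolve_right fun h' => hv h'.1).2

theorem exists_walk_to_inter (h : G.IsSeparation S T) {x y : V} (p : G.Walk x y)
    (hx : x ∉ S) (hy : y ∈ S) :
    ∃ k ∈ S, ∃ q : G.Walk x k, q.support ⊆ p.support ∧
      ∀ z ∈ q.support, z ∈ T ∧ (z ∈ S → z = k) := by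
  induction p with
  | nil => exact absurd hy hx
  | @cons x x' y hxx' p ih =>
    obtain ⟨hxT, hx'T⟩ := (h.mem_or_mem_of_adj hxx').resolve_left fun h' => hx h'.1
    by_cases hx' : x' ∈ S
    · refine ⟨x', hx', .cons hxx' .nil, by simp, ?_⟩
      simp [hxT, hx'T, hx]
    · obtain ⟨k, hk, q, hqp, hq⟩ := ih hx' hy
      refine ⟨k, hk, .cons hxx' q, List.cons_subset_cons _ hqp, ?_⟩
      simp only [Walk.support_cons, List.forall_mem_cons]
      exact ⟨⟨hxT, fun h => absurd h hx⟩, hq⟩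

theorem exists_isCycle_support_subset (h : G.IsSeparation S T) (hK : G.IsClique (S ∩ T))
    {v : V} {c : G.Walk v v} (hc : c.IsCycle) :
    ∃ (w : V) (c' : G.Walk w w), c'.IsCycle ∧ c'.support ⊆ c.support ∧
      ((∀ x ∈ c'.support, x ∈ S) ∨ ∀ x ∈ c'.support, x ∈ T) := by
  classical
  cases c with
  | nil => exact absurd hc Walk.not_isCycle_nil
  | @cons _ y _ hvy P =>
    wlog hvy' : v ∈ S ∧ y ∈ S generalizing S T with H
    · obtain ⟨w, c', hc', hsub, hST⟩ := H h.symm (Set.inter_comm S T ▸ hK)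
        ((h.mem_or_mem_of_adj hvy).resolve_left hvy')
      exact ⟨w, c', hc', hsub, hST.symm⟩
    by_cases hPS : ∀ z ∈ P.support, z ∈ S
    · exact ⟨v, _, hc, List.Subset.refl _, Or.inl (by simpa [hvy'.1] using hPS)⟩
    push Not at hPS
    obtain ⟨z, hzP, hzS⟩ := hPS
    obtain ⟨k₁, hk₁S, q₁, hq₁P, hq₁⟩ :=
      h.exists_walk_to_inter (P.takeUntil z hzP).reverse hzS hvy'.2
    obtain ⟨k₂, hk₂S, q₂, hq₂P, hq₂⟩ := h.exists_walk_to_inter (P.dropUntil z hzP) hzS hvy'.1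
    have hk₁₂ : k₁ ≠ k₂ := by
      refine (P.take_spec hzP ▸ ((Walk.cons_isCycle_iff _ _).1 hc).1).ne_of_mem_support_of_append
        (fun hk => hzS (hk ▸ hk₂S)) ?_ (hq₂P q₂.end_mem_support)
      simpa using hq₁P q₁.end_mem_support
    have hadj : G.Adj k₁ k₂ :=
      hK ⟨hk₁S, (hq₁ k₁ q₁.end_mem_support).1⟩ ⟨hk₂S, (hq₂ k₂ q₂.end_mem_support).1⟩ hk₁₂
    obtain ⟨c', hc', hsub⟩ := q₁.exists_isCycle_of_walks_to_adj q₂ hadj hk₁S hk₂S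
      (fun x hx => (hq₁ x hx).2) (fun x hx => (hq₂ x hx).2)
    refine ⟨k₂, c', hc', fun x hx => ?_, Or.inr fun x hx => ?_⟩
    · refine List.mem_cons_of_mem _ ((hsub x hx).elim (fun hx => ?_) fun hx => ?_)
      · exact P.support_takeUntil_subset_support hzP (by simpa using hq₁P hx)
      · exact P.support_dropUntil_subset_support hzP (hq₂P hx)
    · exact (hsub x hx).elim (fun hx => (hq₁ x hx).1) fun hx => (hq₂ x hx).1

theorem isAcyclic_induce (h : G.IsSeparation S T) (hK : G.IsClique (S ∩ T)) {A : Set V}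
    (hS : (G.induce (S ∩ A)).IsAcyclic) (hT : (G.induce (T ∩ A)).IsAcyclic) :
    (G.induce A).IsAcyclic := by
  rw [isAcyclic_induce_iff] at hS hT ⊢
  intro v c hc hcA
  obtain ⟨_, c', hc', hsub, hc'S | hc'T⟩ := h.exists_isCycle_support_subset hK hc
  · exact hS c' hc' fun x hx => ⟨hc'S x hx, hcA x (hsub hx)⟩
  · exact hT c' hc' fun x hx => ⟨hc'T x hx, hcA x (hsub hx)⟩

theorem encard_neighborSet_induce_le (h : G.IsSeparation S T) {A : Set V} {n : ℕ∞}
    (hK : (S ∩ T).encard ≤ n)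
    (hS : ∀ v : ↥(S ∩ A), ((G.induce (S ∩ A)).neighborSet v).encard ≤ n)
    (hT : ∀ v : ↥(T ∩ A), ((G.induce (T ∩ A)).neighborSet v).encard ≤ n)
    (hnb : ∀ v ∈ S ∩ T, v ∈ A → ∀ u ∈ A, G.Adj v u → u ∈ S ∩ T) (v : A) :
    ((G.induce A).neighborSet v).encard ≤ n := by
  obtain ⟨v, hvA⟩ := v
  rw [encard_neighborSet_induce]
  by_cases hvK : v ∈ S ∩ T
  · exact (Set.encard_mono fun u hu => hnb v hvK hvA u hu.2 hu.1).trans hK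
  wlog hvT : v ∉ T generalizing S T with H
  · refine H h.symm (Set.inter_comm S T ▸ hK) hT hS ?_ (fun hv => hvK ⟨hv.2, hv.1⟩) ?_
    · simpa only [Set.inter_comm T S] using hnb
    · exact fun hvS => hvK ⟨hvS, not_not.1 hvT⟩
  have hvS : v ∈ S := (h.mem_or_mem v).resolve_right hvT
  calc (G.neighborSet v ∩ A).encard
      ≤ (G.neighborSet v ∩ (S ∩ A)).encard :=
        Set.encard_mono fun u ⟨hu, huA⟩ => ⟨hu, h.neighborSet_subset hvT hu, huA⟩
    _ = ((G.induce (S ∩ A)).neighborSet ⟨v, hvS, hvA⟩).encard :=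
        (encard_neighborSet_induce (S ∩ A) ⟨v, hvS, hvA⟩).symm
    _ ≤ n := hS _

theorem isForest3On (h : G.IsSeparation S T) (hK : G.IsClique (S ∩ T))
    (hK₃ : (S ∩ T).encard ≤ 3) {A : Set V} (hS : G.IsForest3On (S ∩ A))
    (hT : G.IsForest3On (T ∩ A)) (hnb : ∀ v ∈ S ∩ T, v ∈ A → ∀ u ∈ A, G.Adj v u → u ∈ S ∩ T) :
    G.IsForest3On A :=
  ⟨h.isAcyclic_induce hK hS.1 hT.1, h.encard_neighborSet_induce_le hK₃ hS.2 hT.2 hnb⟩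

end IsSeparation

end SimpleGraph

open SimpleGraph

theorem stmt6_general {V : Type*} (G : SimpleGraph V) (G1 G2 : G.Subgraph)
    (hunion : G1 ⊔ G2 = ⊤)
    (hH : (∃ u, (G1 ⊓ G2).verts = {u}) ∨
          (∃ u v, G.Adj u v ∧ (G1 ⊓ G2).verts = {u, v}))
    (c1 c2 : V → Fin 2)
    (hf31 : G.IsForest3On {v | v ∈ G1.verts ∧ c1 v = 0})
    (hf1 : (G.induce {v | v ∈ G1.verts ∧ c1 v = 1}).IsAcyclic)
    (hf32 : G.IsForest3On {v | v ∈ G2.verts ∧ c2 v = 0})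
    (hf2 : (G.induce {v | v ∈ G2.verts ∧ c2 v = 1}).IsAcyclic)
    (hagree : ∀ v ∈ (G1 ⊓ G2).verts, c1 v = c2 v)
    (hnb1 : ∀ v ∈ (G1 ⊓ G2).verts, c1 v = 0 →
      ∀ u ∈ G1.verts, u ∉ (G1 ⊓ G2).verts → G.Adj v u → c1 u = 1)
    (hnb2 : ∀ v ∈ (G1 ⊓ G2).verts, c2 v = 0 →
      ∀ u ∈ G2.verts, u ∉ (G1 ⊓ G2).verts → G.Adj v u → c2 u = 1) :
    ∃ c : V → Fin 2,
      (∀ v ∈ G1.verts, c v = c1 v) ∧ (∀ v ∈ G2.verts, c v = c2 v) ∧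
      G.IsForest3On {v | c v = 0} ∧ (G.induce {v | c v = 1}).IsAcyclic := by
  classical
  have hsep := Subgraph.isSeparation_verts hunion
  rw [Subgraph.verts_inf] at hH hagree hnb1 hnb2
  have hK := isClique_and_encard_le_two hH
  set c := G1.verts.piecewise c1 c2
  have hc1 : Set.EqOn c c1 G1.verts := Set.piecewise_eqOn _ _ _
  have hc2 : Set.EqOn c c2 G2.verts := fun v hv => by
    by_cases hv1 : v ∈ G1.verts
    · rw [hc1 hv1, hagree v ⟨hv1, hv⟩]
    · exact Set.piecewise_eq_of_notMem _ _ _ hv1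
  have hcol1 (i : Fin 2) : G1.verts ∩ {v | c v = i} = {v | v ∈ G1.verts ∧ c1 v = i} :=
    hc1.inter_preimage_eq {i}
  have hcol2 (i : Fin 2) : G2.verts ∩ {v | c v = i} = {v | v ∈ G2.verts ∧ c2 v = i} :=
    hc2.inter_preimage_eq {i}
  have hnb : ∀ v ∈ G1.verts ∩ G2.verts, c v = 0 → ∀ u, c u = 0 → G.Adj v u →
      u ∈ G1.verts ∩ G2.verts := by
    intro v hv hv0 u hu0 hvu
    by_contra huK
    rcases hsep.mem_or_mem u with hu | hu
    · exact absurd ((hc1 hu).symm.trans hu0) (by simp [hnb1 v hv (hc1 hv.1 ▸ hv0) u hu huK hvu])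
    · exact absurd ((hc2 hu).symm.trans hu0) (by simp [hnb2 v hv (hc2 hv.2 ▸ hv0) u hu huK hvu])
  have hK₃ : (G1.verts ∩ G2.verts).encard ≤ 3 := hK.2.trans (by norm_num)
  exact ⟨c, hc1, hc2, hsep.isForest3On hK.1 hK₃ (hcol1 0 ▸ hf31) (hcol2 0 ▸ hf32) hnb,
    hsep.isAcyclic_induce hK.1 (hcol1 1 ▸ hf1) (hcol2 1 ▸ hf2)⟩

/-- Gluing decompositions across a cut vertex or cut edge: `G = G1 ∪ G2` with
`H = G1 ∩ G2` a single vertex or a single edge.  Colorings `c1, c2` of `G1, G2`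
(color `0` inducing a forest of max degree `≤ 3`, color `1` inducing a forest)
that agree on `H`, such that in each `Gi` every neighbor outside `H` of a vertex of
`H` colored `0` receives color `1`, glue to such a coloring of `G` extending both. -/
theorem stmt6 {V : Type*} (G : SimpleGraph V) (G1 G2 : G.Subgraph)
    (hind1 : G1.IsInduced) (hind2 : G2.IsInduced)
    (hunion : G1 ⊔ G2 = ⊤)
    (hH : (∃ u, (G1 ⊓ G2).verts = {u}) ∨
          (∃ u v, G.Adj u v ∧ (G1 ⊓ G2).verts = {u, v}))
    (c1 c2 : V → Fin 2)
    (hf31 : G.IsForest3On {v | v ∈ G1.verts ∧ c1 v = 0})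
    (hf1 : (G.induce {v | v ∈ G1.verts ∧ c1 v = 1}).IsAcyclic)
    (hf32 : G.IsForest3On {v | v ∈ G2.verts ∧ c2 v = 0})
    (hf2 : (G.induce {v | v ∈ G2.verts ∧ c2 v = 1}).IsAcyclic)
    (hagree : ∀ v ∈ (G1 ⊓ G2).verts, c1 v = c2 v)
    (hnb1 : ∀ v ∈ (G1 ⊓ G2).verts, c1 v = 0 →
      ∀ u ∈ G1.verts, u ∉ (G1 ⊓ G2).verts → G.Adj v u → c1 u = 1)
    (hnb2 : ∀ v ∈ (G1 ⊓ G2).verts, c2 v = 0 →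
      ∀ u ∈ G2.verts, u ∉ (G1 ⊓ G2).verts → G.Adj v u → c2 u = 1) :
    ∃ c : V → Fin 2,
      (∀ v ∈ G1.verts, c v = c1 v) ∧ (∀ v ∈ G2.verts, c v = c2 v) ∧
      G.IsForest3On {v | c v = 0} ∧ (G.induce {v | c v = 1}).IsAcyclic :=
  stmt6_general G G1 G2 hunion hH c1 c2 hf31 hf1 hf32 hf2 hagree hnb1 hnb2
end

section
/- Let G = G1 ∪ G2 with V(G1) ∩ V(G2) = {s,t}, where there is no edge between s and t in G, and let F1 ⊆ G1 and F2 ⊆ G2 be forests (induced subgraphs on vertex sets V1, V2) such that F1 ∩ F2 consists of exactly the two vertices s and t. If s and t lie in distinct connected components of F2, then the subgraph of G on V1 ∪ V2 whose edges are those of F1 and F2, i.e. F1 ∪ F2, is a forest. -/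
open SimpleGraph

/-- Lift a walk in `G` whose support lies in `S` to a walk in `G.induce S`. -/
lemma aux_lift10 {V : Type*} (G : SimpleGraph V) (S : Set V) :
    ∀ {u v : V} (p : G.Walk u v), (∀ z ∈ p.support, z ∈ S) →
    ∃ (hu : u ∈ S) (hv : v ∈ S) (q : (G.induce S).Walk ⟨u, hu⟩ ⟨v, hv⟩),
      q.map (SimpleGraph.Embedding.induce (G := G) S).toHom = p := by
  intro u v p
  induction p with
  | nil => exact fun h => ⟨h _ (by simp), h _ (by simp), .nil, by simp⟩
  | @cons u w v hadj p ih =>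
    intro h
    obtain ⟨hw, hv, q, hq⟩ := ih (fun z hz => h z (by simp [hz]))
    exact ⟨h _ (by simp), hv, .cons (by exact hadj) q, by subst hq; rfl⟩

lemma aux_cycle10 {V : Type*} (G : SimpleGraph V) (S : Set V) {v : V} (p : G.Walk v v)
    (hc : p.IsCycle) (h : ∀ z ∈ p.support, z ∈ S) : ¬ (G.induce S).IsAcyclic := by
  obtain ⟨hu, hv, q, hq⟩ := aux_lift10 G S p h
  intro hA
  have hinj : Function.Injective ⇑(SimpleGraph.Embedding.induce (G := G) S).toHom :=
    fun a b h => (SimpleGraph.Embedding.induce (G := G) S).injective h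
  exact hA q (by
    rwa [← SimpleGraph.Walk.map_isCycle_iff_of_injective hinj, hq])

/-- Reachability within a vertex set, as a relation on the ambient vertex type. -/
def Reach10 {V : Type*} (G : SimpleGraph V) (S : Set V) (x y : V) : Prop :=
  ∃ (hx : x ∈ S) (hy : y ∈ S), (G.induce S).Reachable ⟨x, hx⟩ ⟨y, hy⟩

lemma Reach10.trans {V : Type*} {G : SimpleGraph V} {S : Set V} {x y z : V}
    (h1 : Reach10 G S x y) (h2 : Reach10 G S y z) : Reach10 G S x z := by
  obtain ⟨hx, hy, r1⟩ := h1
  obtain ⟨hy', hz, r2⟩ := h2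
  exact ⟨hx, hz, r1.trans r2⟩

lemma Reach10.symm {V : Type*} {G : SimpleGraph V} {S : Set V} {x y : V}
    (h1 : Reach10 G S x y) : Reach10 G S y x := by
  obtain ⟨hx, hy, r1⟩ := h1
  exact ⟨hy, hx, r1.symm⟩

lemma Reach10.refl {V : Type*} {G : SimpleGraph V} {S : Set V} {x : V} (hx : x ∈ S) :
    Reach10 G S x x := ⟨hx, hx, Reachable.refl _⟩

lemma Reach10.of_adj {V : Type*} {G : SimpleGraph V} {S : Set V} {x y : V}
    (hx : x ∈ S) (hy : y ∈ S) (h : G.Adj x y) : Reach10 G S x y :=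
  ⟨hx, hy, SimpleGraph.Adj.reachable (by exact h)⟩

lemma Reach10.of_walk {V : Type*} {G : SimpleGraph V} {S : Set V} {x y : V}
    (p : G.Walk x y) (h : ∀ z ∈ p.support, z ∈ S) : Reach10 G S x y := by
  obtain ⟨hu, hv, q, _⟩ := aux_lift10 G S p h
  exact ⟨hu, hv, q.reachable⟩

/-- Gluing two forests across a 2-vertex cut `{s, t}` with `st` not an edge: if `s` and
`t` lie in distinct components of the second forest, the union of the two forests is a
forest. -/
theorem stmt10 {V : Type*} (G : SimpleGraph V) {s t : V}
    (hst : s ≠ t) (hstE : ¬ G.Adj s t)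
    (A B : Set V) (hcover : A ∪ B = Set.univ) (hAB : A ∩ B = {s, t})
    (hedges : ∀ u v, G.Adj u v → (u ∈ A ∧ v ∈ A) ∨ (u ∈ B ∧ v ∈ B))
    (V1 V2 : Set V) (hV1 : V1 ⊆ A) (hV2 : V2 ⊆ B)
    (hs1 : s ∈ V1) (ht1 : t ∈ V1) (hs2 : s ∈ V2) (ht2 : t ∈ V2)
    (hinter : V1 ∩ V2 = {s, t})
    (hf1 : (G.induce V1).IsAcyclic) (hf2 : (G.induce V2).IsAcyclic)
    (hcomp : ¬ (G.induce V2).Reachable ⟨s, hs2⟩ ⟨t, ht2⟩) :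
    (G.induce (V1 ∪ V2)).IsAcyclic := by
  -- notation
  set W := V1 ∪ V2 with hW
  -- ¬ Reach10 G V2 s t
  have hR2st : ¬ Reach10 G V2 s t := by
    rintro ⟨hx, hy, hr⟩
    exact hcomp hr
  -- intersection membership
  have hmemst : ∀ x, x ∈ V1 → x ∈ V2 → x = s ∨ x = t := by
    intro x h1 h2
    have : x ∈ V1 ∩ V2 := ⟨h1, h2⟩
    rw [hinter] at this
    simpa using this
  -- edge classification
  have hclass : ∀ u w, G.Adj u w → u ∈ W → w ∈ W →
      (u ∈ V1 ∧ w ∈ V1) ∨ (u ∈ V2 ∧ w ∈ V2) := by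
    intro u w hadj hu hw
    have key : ∀ x, x ∈ W → x ∈ A → x ∈ V1 := by
      intro x hxW hxA
      rcases hxW with hx | hx
      · exact hx
      · have : x ∈ A ∩ B := ⟨hxA, hV2 hx⟩
        rw [hAB] at this
        rcases this with rfl | rfl
        · exact hs1
        · simp_all
    have key2 : ∀ x, x ∈ W → x ∈ B → x ∈ V2 := by
      intro x hxW hxB
      rcases hxW with hx | hx
      · have : x ∈ A ∩ B := ⟨hV1 hx, hxB⟩
        rw [hAB] at this
        rcases this with rfl | rfl
        · exact hs2
        · simp_all
      · exact hx
    rcases hedges u w hadj with ⟨huA, hwA⟩ | ⟨huB, hwB⟩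
    · exact Or.inl ⟨key u hu huA, key w hw hwA⟩
    · exact Or.inr ⟨key2 u hu huB, key2 w hw hwB⟩
  -- M21 : a walk from outside V1 to inside V1 first meets V1 at s or t,
  -- reachable within V2 from the start.
  have M21 : ∀ {z y : V} (p : G.Walk z y), (∀ x ∈ p.support, x ∈ W) → z ∉ V1 → y ∈ V1 →
      ∃ b, (b = s ∨ b = t) ∧ b ∈ p.support ∧ Reach10 G V2 z b := by
    intro z y p
    induction p with
    | nil => intro _ hz hy; exact absurd hy hz
    | @cons z w y hadj r ih =>
      intro hsupp hz hy
      have hzW : z ∈ W := hsupp _ (by simp)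
      have hwW : w ∈ W := hsupp _ (by simp)
      have hedge : z ∈ V2 ∧ w ∈ V2 := by
        rcases hclass z w hadj hzW hwW with ⟨h1, _⟩ | h2
        · exact absurd h1 hz
        · exact h2
      by_cases hwV1 : w ∈ V1
      · exact ⟨w, hmemst w hwV1 hedge.2, by simp,
          Reach10.of_adj hedge.1 hedge.2 hadj⟩
      · obtain ⟨b, hb, hbs, hbr⟩ := ih (fun x hx => hsupp x (by simp [hx])) hwV1 hy
        exact ⟨b, hb, by simp [hbs],
          (Reach10.of_adj hedge.1 hedge.2 hadj).trans hbr⟩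
  -- M1 : a path between two V1-vertices stays in V1.
  have M1 : ∀ {x y : V} (p : G.Walk x y), p.IsPath → (∀ z ∈ p.support, z ∈ W) →
      x ∈ V1 → y ∈ V1 → ∀ z ∈ p.support, z ∈ V1 := by
    intro x y p
    induction p with
    | nil => intro _ _ hx _ z hz; simp at hz; subst hz; exact hx
    | @cons x w y hadj q ih =>
      intro hp hsupp hx hy
      have hxW : x ∈ W := hsupp _ (by simp)
      have hwW : w ∈ W := hsupp _ (by simp)
      rcases hclass x w hadj hxW hwW with ⟨_, hwV1⟩ | ⟨hx2, hw2⟩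
      · have hq := (SimpleGraph.Walk.cons_isPath_iff _ _).mp hp
        have := ih hq.1 (fun z hz => hsupp z (by simp [hz])) hwV1 hy
        intro z hz
        rcases (by simpa using hz : z = x ∨ z ∈ q.support) with rfl | hz'
        · exact hx
        · exact this z hz'
      · -- x ∈ {s,t}; the walk must come back through the other of s,t: contradiction
        by_cases hwV1 : w ∈ V1
        · have hq := (SimpleGraph.Walk.cons_isPath_iff _ _).mp hp
          have := ih hq.1 (fun z hz => hsupp z (by simp [hz])) hwV1 hy
          intro z hz
          rcases (by simpa using hz : z = x ∨ z ∈ q.support) with rfl | hz'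
          · exact hx
          · exact this z hz'
        · exfalso
          obtain ⟨b, hb, hbs, hbr⟩ := M21 q (fun z hz => hsupp z (by simp [hz])) hwV1 hy
          have hq := (SimpleGraph.Walk.cons_isPath_iff _ _).mp hp
          have hbx : b ≠ x := fun h => hq.2 (h ▸ hbs)
          have hxst := hmemst x hx hx2
          have hxb : Reach10 G V2 x b :=
            (Reach10.of_adj hx2 hw2 hadj).trans hbr
          rcases hxst with rfl | rfl
          · rcases hb with rfl | rfl
            · exact hbx rfl
            · exact hR2st hxb
          · rcases hb with rfl | rfl
            · exact hR2st hxb.symm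
            · exact hbx rfl
  -- KEY : mutual statement for paths ending in V2.
  have KEY : ∀ (n : ℕ) {x y : V} (p : G.Walk x y), p.length ≤ n → p.IsPath →
      (∀ z ∈ p.support, z ∈ W) →
      ((x ∈ V2 → y ∈ V2 →
        (∀ z ∈ p.support, z ∈ V2) ∨
        ∃ a b, ((a = s ∧ b = t) ∨ (a = t ∧ b = s)) ∧ b ∈ p.support ∧
          Reach10 G V2 x a ∧ Reach10 G V2 b y)
      ∧ (x ∉ V2 → y ∈ V2 →
        ∃ b, (b = s ∨ b = t) ∧ b ∈ p.support ∧ Reach10 G V2 b y)) := by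
    intro n
    induction n with
    | zero =>
      intro x y p hlen hp hsupp
      cases p with
      | nil =>
        constructor
        · intro hx _; left; intro z hz; simp at hz; subst hz; exact hx
        · intro hx hy; exact absurd hy hx
      | cons h q => simp at hlen
    | succ n ih =>
      intro x y p hlen hp hsupp
      cases p with
      | nil =>
        constructor
        · intro hx _; left; intro z hz; simp at hz; subst hz; exact hx
        · intro hx hy; exact absurd hy hx
      | @cons _ w _ hadj q =>
        have hq := (SimpleGraph.Walk.cons_isPath_iff _ _).mp hp
        have hqlen : q.length ≤ n := by
          simp only [SimpleGraph.Walk.length_cons] at hlen; omega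
        have hqsupp : ∀ z ∈ q.support, z ∈ W := fun z hz => hsupp z (by simp [hz])
        have hxW : x ∈ W := hsupp _ (by simp)
        have hwW : w ∈ W := hsupp _ (by simp)
        constructor
        · -- M2 : x ∈ V2, y ∈ V2
          intro hx hy
          rcases hclass x w hadj hxW hwW with ⟨hx1, hw1⟩ | ⟨hx2, hw2⟩
          · -- edge within V1; x ∈ {s,t}, w ∈ V1
            by_cases hw2 : w ∈ V2
            ·
              rcases (ih q hqlen hq.1 hqsupp).1 hw2 hy with hall | ⟨a, b, hab, hbs, hra, hrb⟩
              · left; intro z hz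
                rcases (by simpa using hz : z = x ∨ z ∈ q.support) with rfl | hz'
                · exact hx
                · exact hall z hz'
              · exact Or.inr ⟨a, b, hab, by simp [hbs],
                  (Reach10.of_adj hx hw2 hadj).trans hra, hrb⟩
            · -- w ∉ V2 : M12 on q
              obtain ⟨b, hb, hbs, hbr⟩ := (ih q hqlen hq.1 hqsupp).2 hw2 hy
              have hbx : b ≠ x := fun h => hq.2 (h ▸ hbs)
              right
              rcases hmemst x hx1 hx with hxs | hxt
              · rcases hb with hbs' | hbt
                · exact absurd (hbs'.trans hxs.symm) hbx
                · exact ⟨x, b, Or.inl ⟨hxs, hbt⟩, by simp [hbs], Reach10.refl hx, hbr⟩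
              · rcases hb with hbs' | hbt
                · exact ⟨x, b, Or.inr ⟨hxt, hbs'⟩, by simp [hbs], Reach10.refl hx, hbr⟩
                · exact absurd (hbt.trans hxt.symm) hbx
          · -- edge within V2
            rcases (ih q hqlen hq.1 hqsupp).1 hw2 hy with hall | ⟨a, b, hab, hbs, hra, hrb⟩
            · left; intro z hz
              rcases (by simpa using hz : z = x ∨ z ∈ q.support) with rfl | hz'
              · exact hx
              · exact hall z hz'
            · exact Or.inr ⟨a, b, hab, by simp [hbs],
                (Reach10.of_adj hx2 hw2 hadj).trans hra, hrb⟩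
        · -- M12 : x ∉ V2, y ∈ V2
          intro hx hy
          have hedge1 : x ∈ V1 ∧ w ∈ V1 := by
            rcases hclass x w hadj hxW hwW with h1 | ⟨h2, _⟩
            · exact h1
            · exact absurd h2 hx
          by_cases hw2 : w ∈ V2
          · -- w ∈ {s,t}; use M2 on q
            have hwst := hmemst w hedge1.2 hw2
            rcases (ih q hqlen hq.1 hqsupp).1 hw2 hy with hall | ⟨a, b, hab, hbs, hra, hrb⟩
            · exact ⟨w, hwst, by simp,
                Reach10.of_walk q (fun z hz => hall z hz)⟩
            · -- R2 w a with w ∈ {s,t}: a must equal w, so b is the other one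
              rcases hwst with hws | hwt
              · rcases hab with ⟨has, hbt⟩ | ⟨hat, hbs'⟩
                · exact ⟨b, Or.inr hbt, by simp [hbs], hrb⟩
                · exact absurd (by rw [hws, hat] at hra; exact hra) hR2st
              · rcases hab with ⟨has, hbt⟩ | ⟨hat, hbs'⟩
                · exact absurd (by rw [hwt, has] at hra; exact hra.symm) hR2st
                · exact ⟨b, Or.inl hbs', by simp [hbs], hrb⟩
          · obtain ⟨b, hb, hbs, hbr⟩ := (ih q hqlen hq.1 hqsupp).2 hw2 hy
            exact ⟨b, hb, by simp [hbs], hbr⟩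
  -- main argument
  intro v c hc
  -- map the cycle down to G
  have hinj : Function.Injective ⇑(SimpleGraph.Embedding.induce (G := G) W).toHom :=
    fun a b h => (SimpleGraph.Embedding.induce (G := G) W).injective h
  have hc' : (c.map (SimpleGraph.Embedding.induce (G := G) W).toHom).IsCycle := hc.map hinj
  have hsupp : ∀ z ∈ (c.map (SimpleGraph.Embedding.induce (G := G) W).toHom).support, z ∈ W := by
    intro z hz
    rw [SimpleGraph.Walk.support_map] at hz
    obtain ⟨a, _, rfl⟩ := List.mem_map.mp hz
    exact a.2
  revert hc' hsupp
  generalize c.map (SimpleGraph.Embedding.induce (G := G) W).toHom = c'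
  intro hc' hsupp
  -- analyze c'
  cases c' with
  | nil => exact hc'.ne_nil rfl
  | @cons _ w _ hadj p =>
    have hcyc := (SimpleGraph.Walk.cons_isCycle_iff _ _).mp hc'
    have hvW : (v : V) ∈ W := hsupp _ (by simp)
    have hwW : w ∈ W := hsupp _ (by rw [SimpleGraph.Walk.support_cons]; exact List.mem_cons_of_mem _ p.start_mem_support)
    have hpsupp : ∀ z ∈ p.support, z ∈ W := fun z hz => hsupp z (by rw [SimpleGraph.Walk.support_cons]; exact List.mem_cons_of_mem _ hz)
    rcases hclass _ w hadj hvW hwW with ⟨hv1, hw1⟩ | ⟨hv2, hw2⟩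
    · -- edge within V1: whole cycle in V1
      have hall := M1 p hcyc.1 hpsupp hw1 hv1
      refine aux_cycle10 G V1 (SimpleGraph.Walk.cons hadj p) hc' ?_ hf1
      intro z hz
      rcases (by rw [SimpleGraph.Walk.support_cons] at hz; simpa using hz : z = (v : V) ∨ z ∈ p.support) with rfl | hz'
      · exact hv1
      · exact hall z hz'
    · -- edge within V2
      rcases (KEY p.length p le_rfl hcyc.1 hpsupp).1 hw2 hv2 with hall | ⟨a, b, hab, _, hra, hrb⟩
      · refine aux_cycle10 G V2 (SimpleGraph.Walk.cons hadj p) hc' ?_ hf2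
        intro z hz
        rcases (by rw [SimpleGraph.Walk.support_cons] at hz; simpa using hz : z = (v : V) ∨ z ∈ p.support) with rfl | hz'
        · exact hv2
        · exact hall z hz'
      · -- a and b both reach w in V2: contradiction with hcomp
        have h1 : Reach10 G V2 a w := hra.symm
        have h2 : Reach10 G V2 b w :=
          hrb.trans (Reach10.of_adj hv2 hw2 hadj)
        have hab' : Reach10 G V2 a b := h1.trans h2.symm
        rcases hab with ⟨rfl, rfl⟩ | ⟨rfl, rfl⟩
        · exact hR2st hab'
        · exact hR2st hab'.symm
end
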